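/- arXiv:2605.24864 — 2 statements merged into one kernel-verified Lean document; each statement's English description precedes it below -/
import Mathlib

section
/- Let G be a finite VZ p-group (i.e., every nonlinear irreducible complex character of G vanishes on G \ Z(G)). Then for every nonlinear irreducible character χ of G, cod(χ) = |G/Z(G)|^{1/2} · |Z(G) : ker(χ)|, and ker(χ) is a proper subgroup of Z(G) not containing G' with Z(G)/ker(χ) cyclic. -/
open scoped Pointwise

/-- A representation is irreducible if the space is nontrivial and the only
invariant subspaces are `⊥` and `⊤`. -/
def Rep.IsIrreducible {G V : Type*} [Group G] [AddCommGroup V] [Module ℂ V]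
    (ρ : Representation ℂ G V) : Prop :=
  Nontrivial V ∧ ∀ W : Submodule ℂ V, (∀ g : G, ∀ v ∈ W, ρ g v ∈ W) → W = ⊥ ∨ W = ⊤

/-- The kernel of a representation. -/
noncomputable def Rep.ker {G V : Type*} [Group G] [AddCommGroup V] [Module ℂ V]
    (ρ : Representation ℂ G V) : Subgroup G := (Representation.asGroupHom ρ).ker

/-- The codegree of (the character of) a representation: `|G : ker| / degree`. -/
noncomputable def Rep.cod {G V : Type*} [Group G] [AddCommGroup V] [Module ℂ V]
    (ρ : Representation ℂ G V) : ℕ := (Rep.ker ρ).index / Module.finrank ℂ V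

/-- The set of codegrees of irreducible (complex) characters of `G`. -/
def codSet (G : Type*) [Group G] : Set ℕ :=
  {n | ∃ (V : Type) (_ : AddCommGroup V) (_ : Module ℂ V) (_ : FiniteDimensional ℂ V)
      (ρ : Representation ℂ G V), Rep.IsIrreducible ρ ∧ Rep.cod ρ = n}

/-- The set of codegrees of nonlinear irreducible characters of `G`. -/
def nlCodSet (G : Type*) [Group G] : Set ℕ :=
  {n | ∃ (V : Type) (_ : AddCommGroup V) (_ : Module ℂ V) (_ : FiniteDimensional ℂ V)
      (ρ : Representation ℂ G V), Rep.IsIrreducible ρ ∧ 1 < Module.finrank ℂ V ∧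
      Rep.cod ρ = n}

/-- The set of degrees of irreducible characters of `G`. -/
def cdSet (G : Type*) [Group G] : Set ℕ :=
  {n | ∃ (V : Type) (_ : AddCommGroup V) (_ : Module ℂ V) (_ : FiniteDimensional ℂ V)
      (ρ : Representation ℂ G V), Rep.IsIrreducible ρ ∧ Module.finrank ℂ V = n}

/-- `G` is a VZ-group: every nonlinear irreducible character vanishes off the center. -/
def IsVZ (G : Type*) [Group G] : Prop :=
  ∀ (V : Type) (_ : AddCommGroup V) (_ : Module ℂ V) (_ : FiniteDimensional ℂ V)
    (ρ : Representation ℂ G V), Rep.IsIrreducible ρ → 1 < Module.finrank ℂ V →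
    ∀ g ∉ Subgroup.center G, LinearMap.trace ℂ V (ρ g) = 0

/-- `G` is a Camina group: the conjugacy class of every `g ∉ G'` is `gG'`. -/
def IsCamina (G : Type*) [Group G] : Prop :=
  ∀ g : G, g ∉ commutator G → {h | IsConj g h} = g • (commutator G : Set G)

/-!
By Schur's lemma a central element `z` acts on an irreducible representation by a scalar `λ z`,
and `λ` embeds `Z(G) / (ker χ ∩ Z(G))` into `ℂˣ`, so this quotient is cyclic; likewise, if
`G' ≤ ker χ` then every `ρ g` commutes with the whole image and is a scalar, forcing `χ(1) = 1`.
If `χ` vanishes off `Z(G)`, then `ker χ ≤ Z(G)` since `χ = χ(1) ≠ 0` on the kernel, and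
`χ(z) χ(z⁻¹) = χ(1)²` on `Z(G)` turns the orthogonality relation `∑ χ(g) χ(g⁻¹) = |G|` into
`|Z(G)| χ(1)² = |G|`. If moreover `ker χ = Z(G)`, then `∑ χ(g) = |Z(G)| χ(1) ≠ 0`, contradicting
that a nontrivial irreducible representation has no invariants. Finally
`cod χ = |G : ker χ| / χ(1) = |Z(G) : ker χ| · |G : Z(G)| / χ(1) = |Z(G) : ker χ| · χ(1)`.
-/

namespace Representation.IsIrreducible

variable {G k V : Type*} [Field k] [AddCommGroup V] [Module k V]

section Monoid

variable [Monoid G]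

theorem nontrivial (ρ : Representation k G V) [ρ.IsIrreducible] : Nontrivial V := by
  by_contra hV
  rw [not_nontrivial_iff_subsingleton] at hV
  obtain ⟨S, T, hST⟩ := exists_pair_ne (Subrepresentation ρ)
  exact hST (Subrepresentation.toSubmodule_injective (Subsingleton.elim _ _))

variable {ρ : Representation k G V} [ρ.IsIrreducible]

theorem finrank_eq_one_of_forall_eq_smul_one (h : ∀ g, ∃ c : k, ρ g = c • 1) :
    Module.finrank k V = 1 := by
  have := nontrivial ρ
  obtain ⟨v, hv⟩ := exists_ne (0 : V)
  let L : Subrepresentation ρ := ⟨k ∙ v, fun g w hw => by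
    obtain ⟨c, hc⟩ := h g
    simpa [hc] using Submodule.smul_mem _ c hw⟩
  rcases eq_bot_or_eq_top L with hL | hL
  · have hspan : (k ∙ v) = ⊥ := congrArg Subrepresentation.toSubmodule hL
    exact absurd (Submodule.span_singleton_eq_bot.mp hspan) hv
  · have hspan : (k ∙ v) = ⊤ := congrArg Subrepresentation.toSubmodule hL
    rw [← finrank_top k V, ← hspan, finrank_span_singleton hv]

variable [FiniteDimensional k V] [IsAlgClosed k]

theorem exists_eq_smul_one_of_commute (f : Module.End k V) (hf : ∀ g, Commute f (ρ g)) :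
    ∃ c : k, f = c • 1 := by
  obtain ⟨c, hc⟩ := algebraMap_intertwiningMap_bijective_of_isAlgClosed.2
    (⟨f, fun g => (hf g).eq⟩ : IntertwiningMap ρ ρ)
  exact ⟨c, (congrArg IntertwiningMap.toLinearMap hc).symm⟩

end Monoid

section Group

variable [Group G] {ρ : Representation k G V} [ρ.IsIrreducible]

theorem invariants_eq_bot_of_one_lt_finrank (hnl : 1 < Module.finrank k V) :
    ρ.invariants = ⊥ := by
  let I : Subrepresentation ρ := ⟨ρ.invariants, fun g v hv h => by
    rw [← Module.End.mul_apply, ← map_mul, hv, hv]⟩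
  rcases eq_bot_or_eq_top I with hI | hI
  · exact congrArg Subrepresentation.toSubmodule hI
  · refine absurd (finrank_eq_one_of_forall_eq_smul_one (ρ := ρ) fun g => ⟨1, ?_⟩) hnl.ne'
    ext v
    have hv : v ∈ I := hI ▸ Submodule.mem_top (R := k) (x := v)
    simpa using hv g

variable [FiniteDimensional k V] [IsAlgClosed k]

variable (ρ) in
/-- Schur's lemma: `algebraMap k (IntertwiningMap ρ ρ)` is bijective, so every central element
acts by a scalar. -/
noncomputable def centralChar : Subgroup.center G →* k :=
  (RingEquiv.ofBijective _
      algebraMap_intertwiningMap_bijective_of_isAlgClosed).symm.toMonoidHom.comp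
    { toFun z := IntertwiningMap.centralMul ρ z z.2
      map_one' := by ext; exact congrFun (congrArg DFunLike.coe ρ.map_one) _
      map_mul' _ _ := by ext; exact congrFun (congrArg DFunLike.coe (ρ.map_mul _ _)) _ }

theorem centralChar_smul_one (z : Subgroup.center G) : centralChar ρ z • 1 = ρ z :=
  congrArg IntertwiningMap.toLinearMap
    ((RingEquiv.ofBijective _ algebraMap_intertwiningMap_bijective_of_isAlgClosed).apply_symm_apply
      (IntertwiningMap.centralMul ρ z z.2))

theorem centralChar_eq_one_iff (z : Subgroup.center G) : centralChar ρ z = 1 ↔ ρ z = 1 := by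
  have := nontrivial ρ
  rw [← centralChar_smul_one, ← Algebra.algebraMap_eq_smul_one,
    (algebraMap k (Module.End k V)).injective.eq_iff' (map_one _)]

theorem character_coe_center (z : Subgroup.center G) :
    ρ.character z = centralChar ρ z * Module.finrank k V := by
  rw [character, ← centralChar_smul_one, map_smul, LinearMap.trace_one, smul_eq_mul]

end Group

end Representation.IsIrreducible

theorem Subgroup.sum_ite_mem {G M : Type*} [Group G] [Fintype G] [AddCommMonoid M]
    (H : Subgroup G) [DecidablePred (· ∈ H)] (a : M) :
    ∑ g : G, (if g ∈ H then a else 0) = Nat.card H • a := by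
  rw [Finset.sum_ite, Finset.sum_const, Finset.sum_const_zero, add_zero, Nat.card_eq_fintype_card,
    Fintype.card_subtype]

namespace Rep

open Representation Representation.IsIrreducible
open scoped commutatorElement

variable {G V : Type*} [Group G] [AddCommGroup V] [Module ℂ V] {ρ : Representation ℂ G V}

theorem IsIrreducible.isIrreducible (hρ : Rep.IsIrreducible ρ) : ρ.IsIrreducible where
  exists_pair_ne := by
    have := hρ.1
    refine ⟨⊥, ⊤, fun h => bot_ne_top (α := Submodule ℂ V) ?_⟩
    exact congrArg Subrepresentation.toSubmodule h
  eq_bot_or_eq_top W := (hρ.2 W.toSubmodule W.apply_mem_toSubmodule).imp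
    (fun h => Subrepresentation.toSubmodule_injective h)
    (fun h => Subrepresentation.toSubmodule_injective h)

theorem mem_ker_iff {g : G} : g ∈ Rep.ker ρ ↔ ρ g = 1 := by
  rw [Rep.ker, MonoidHom.mem_ker, Units.ext_iff, asGroupHom_apply, Units.val_one]

theorem cod_eq_relIndex_mul_finrank {H : Subgroup G} (hker : Rep.ker ρ ≤ H)
    (hH : Module.finrank ℂ V ^ 2 = H.index) :
    Rep.cod ρ = (Rep.ker ρ).relIndex H * Module.finrank ℂ V := by
  rw [Rep.cod, ← Subgroup.relIndex_mul_index hker, ← hH, sq, ← mul_assoc]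
  rcases (Module.finrank ℂ V).eq_zero_or_pos with hd | hd
  · simp [hd]
  · exact Nat.mul_div_cancel _ hd

variable [FiniteDimensional ℂ V] [ρ.IsIrreducible]

theorem ker_centralChar : (centralChar ρ).ker = (Rep.ker ρ).subgroupOf (Subgroup.center G) := by
  ext z
  rw [MonoidHom.mem_ker, Subgroup.mem_subgroupOf, mem_ker_iff, centralChar_eq_one_iff]

theorem isCyclic_center_quotient_ker [Finite G] :
    IsCyclic (Subgroup.center G ⧸ (Rep.ker ρ).subgroupOf (Subgroup.center G)) := by
  rw [← ker_centralChar, ← MonoidHom.ker_toHomUnits]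
  exact isCyclic_of_injective_ringHom
    ((Units.coeHom ℂ).comp (QuotientGroup.kerLift (centralChar ρ).toHomUnits))
    (Units.val_injective.comp (QuotientGroup.kerLift_injective _))

theorem not_commutator_le_ker (hnl : 1 < Module.finrank ℂ V) : ¬ commutator G ≤ Rep.ker ρ := by
  intro hle
  refine hnl.ne' (finrank_eq_one_of_forall_eq_smul_one (ρ := ρ) fun g =>
    exists_eq_smul_one_of_commute (ρ := ρ) (ρ g) fun h => ?_)
  have hcomm : ρ ⁅g, h⁆ = 1 :=
    mem_ker_iff.mp <|
      hle (Subgroup.commutator_mem_commutator (Subgroup.mem_top g) (Subgroup.mem_top h))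
  rw [Commute, SemiconjBy, ← map_mul, ← map_mul, ← one_mul (ρ (h * g)), ← hcomm, ← map_mul]
  congr 1
  group

theorem ker_le_center_of_character_eq_zero
    (hvz : ∀ g ∉ Subgroup.center G, ρ.character g = 0) : Rep.ker ρ ≤ Subgroup.center G := by
  intro g hg
  by_contra hgZ
  have := nontrivial ρ
  have h := hvz g hgZ
  rw [character, mem_ker_iff.mp hg, LinearMap.trace_one, Nat.cast_eq_zero] at h
  exact Module.finrank_pos.ne' h

variable [Finite G]

theorem finrank_sq_eq_index_center (hvz : ∀ g ∉ Subgroup.center G, ρ.character g = 0) :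
    Module.finrank ℂ V ^ 2 = (Subgroup.center G).index := by
  classical
  cases nonempty_fintype G
  have : Invertible (Nat.card G : ℂ) := invertibleOfNonzero (by simp)
  have hterm : ∀ g : G, ρ.character g * ρ.character g⁻¹ =
      if g ∈ Subgroup.center G then (Module.finrank ℂ V : ℂ) ^ 2 else 0 := by
    intro g
    split_ifs with hg
    · have hc := congrArg (centralChar ρ) (mul_inv_cancel (⟨g, hg⟩ : Subgroup.center G))
      rw [map_mul, map_one] at hc
      rw [← Subgroup.coe_mk _ g hg, ← Subgroup.coe_inv, character_coe_center,
        character_coe_center]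
      linear_combination (Module.finrank ℂ V : ℂ) ^ 2 * hc
    · rw [hvz g hg, zero_mul]
  have horth := char_orthonormal ρ ρ
  rw [if_pos ⟨Representation.Equiv.refl ρ⟩, Finset.sum_congr rfl fun g _ => hterm g,
    Subgroup.sum_ite_mem, nsmul_eq_mul, inv_mul_eq_one₀ (by simp)] at horth
  refine Nat.eq_of_mul_eq_mul_left (Nat.card_pos (α := Subgroup.center G)) ?_
  rw [Subgroup.card_mul_index]
  exact_mod_cast horth.symm

theorem ker_ne_center (hvz : ∀ g ∉ Subgroup.center G, ρ.character g = 0)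
    (hnl : 1 < Module.finrank ℂ V) : Rep.ker ρ ≠ Subgroup.center G := by
  classical
  cases nonempty_fintype G
  have : Invertible (Nat.card G : ℂ) := invertibleOfNonzero (by simp)
  intro hker
  have hterm : ∀ g : G, ρ.character g =
      if g ∈ Subgroup.center G then (Module.finrank ℂ V : ℂ) else 0 := by
    intro g
    split_ifs with hg
    · rw [character, mem_ker_iff.mp (hker ▸ hg), LinearMap.trace_one]
    · exact hvz g hg
  have hsum := card_inv_mul_sum_char_eq_finrank ρ
  rw [invariants_eq_bot_of_one_lt_finrank hnl, finrank_bot,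
    Finset.sum_congr rfl fun g _ => hterm g, Subgroup.sum_ite_mem, nsmul_eq_mul] at hsum
  simp only [Nat.cast_zero, mul_eq_zero, inv_eq_zero, Nat.cast_eq_zero] at hsum
  have := Nat.card_pos (α := G)
  have := Nat.card_pos (α := Subgroup.center G)
  omega

end Rep

theorem stmt5_general (G : Type*) [Group G] [Finite G]
    (hVZ : IsVZ G)
    (V : Type) [AddCommGroup V] [Module ℂ V] [FiniteDimensional ℂ V]
    (ρ : Representation ℂ G V) (hirr : Rep.IsIrreducible ρ)
    (hnl : 1 < Module.finrank ℂ V) :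
    (Rep.cod ρ) ^ 2 =
        Nat.card (G ⧸ Subgroup.center G) *
          ((Rep.ker ρ).relIndex (Subgroup.center G)) ^ 2 ∧
      Rep.ker ρ < Subgroup.center G ∧
      ¬ commutator G ≤ Rep.ker ρ ∧
      IsCyclic ((Subgroup.center G) ⧸ ((Rep.ker ρ).subgroupOf (Subgroup.center G))) := by
  have := hirr.isIrreducible
  have hvz : ∀ g ∉ Subgroup.center G, ρ.character g = 0 :=
    hVZ V inferInstance inferInstance inferInstance ρ hirr hnl
  have hker := Rep.ker_le_center_of_character_eq_zero hvz
  have hdeg := Rep.finrank_sq_eq_index_center hvz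
  refine ⟨?_, hker.lt_of_ne (Rep.ker_ne_center hvz hnl), Rep.not_commutator_le_ker hnl,
    Rep.isCyclic_center_quotient_ker⟩
  rw [Rep.cod_eq_relIndex_mul_finrank hker hdeg, mul_pow, hdeg, mul_comm]
  rfl

/-- Let `G` be a finite VZ `p`-group. For every nonlinear irreducible
character `χ`: `cod(χ) = |G/Z(G)|^{1/2} · |Z(G) : ker χ|` (stated squared), `ker χ` is a
proper subgroup of `Z(G)` not containing `G'`, and `Z(G)/ker χ` is cyclic. -/
theorem stmt5 {p : ℕ} [Fact p.Prime] (G : Type*) [Group G] [Finite G]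
    (hG : IsPGroup p G) (hVZ : IsVZ G)
    (V : Type) [AddCommGroup V] [Module ℂ V] [FiniteDimensional ℂ V]
    (ρ : Representation ℂ G V) (hirr : Rep.IsIrreducible ρ)
    (hnl : 1 < Module.finrank ℂ V) :
    (Rep.cod ρ) ^ 2 =
        Nat.card (G ⧸ Subgroup.center G) *
          ((Rep.ker ρ).relIndex (Subgroup.center G)) ^ 2 ∧
      Rep.ker ρ < Subgroup.center G ∧
      ¬ commutator G ≤ Rep.ker ρ ∧
      IsCyclic ((Subgroup.center G) ⧸ ((Rep.ker ρ).subgroupOf (Subgroup.center G))) :=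
  stmt5_general G hVZ V ρ hirr hnl
end

section
/- Let G be a finite group of order p^5 (p prime) with nilpotency class at least 3 and character degree set cd(G) = {1, p}, and suppose Z(G) is non-cyclic. Then for every nonlinear irreducible character χ of G, p^2 ≤ cod(χ) ≤ p^3. -/
open scoped Pointwise

set_option linter.unusedSectionVars false

section Aux
variable {G V : Type*} [Group G] [AddCommGroup V] [Module ℂ V] [FiniteDimensional ℂ V]

lemma Rep.mem_ker_iff_s15 (ρ : Representation ℂ G V) {x : G} :
    x ∈ Rep.ker ρ ↔ ρ x = 1 := by
  rw [Rep.ker, MonoidHom.mem_ker, Units.ext_iff]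
  constructor
  · intro h; rw [← Representation.asGroupHom_apply, h]; rfl
  · intro h; rw [Representation.asGroupHom_apply] at *; simpa using h

lemma schur_scalar (ρ : Representation ℂ G V) (hirr : Rep.IsIrreducible ρ)
    (f : Module.End ℂ V) (hf : ∀ g : G, f * ρ g = ρ g * f) :
    ∃ c : ℂ, f = c • (1 : Module.End ℂ V) := by
  have : Nontrivial V := hirr.1
  obtain ⟨c, hc⟩ := Module.End.exists_eigenvalue f
  refine ⟨c, ?_⟩
  have hW : ∀ g : G, ∀ v ∈ Module.End.eigenspace f c, ρ g v ∈ Module.End.eigenspace f c := by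
    intro g v hv
    rw [Module.End.mem_eigenspace_iff] at hv ⊢
    have h1 : f (ρ g v) = ρ g (f v) := by
      have := congrArg (fun T => T v) (hf g)
      simpa [Module.End.mul_apply] using this
    rw [h1, hv, map_smul]
  have htop : Module.End.eigenspace f c = ⊤ :=
    (hirr.2 _ hW).resolve_left hc
  ext v
  have hv : v ∈ Module.End.eigenspace f c := htop ▸ Submodule.mem_top
  rw [Module.End.mem_eigenspace_iff] at hv
  simpa using hv

lemma exists_noncomm (ρ : Representation ℂ G V) (hirr : Rep.IsIrreducible ρ)
    (hnl : 1 < Module.finrank ℂ V) :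
    ∃ a b : G, ρ a * ρ b ≠ ρ b * ρ a := by
  by_contra h
  push_neg at h
  have : Nontrivial V := hirr.1
  obtain ⟨v, hv⟩ := exists_ne (0 : V)
  have hWinv : ∀ g : G, ∀ w ∈ (ℂ ∙ v), ρ g w ∈ (ℂ ∙ v) := by
    intro g w hw
    obtain ⟨c, hc⟩ := schur_scalar ρ hirr (ρ g) (fun g' => by rw [h g g'])
    rw [hc]
    simpa using Submodule.smul_mem _ c hw
  have hne : (ℂ ∙ v) ≠ (⊥ : Submodule ℂ V) := by
    simp [Submodule.span_singleton_eq_bot, hv]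
  have htop : (ℂ ∙ v) = (⊤ : Submodule ℂ V) := (hirr.2 _ hWinv).resolve_left hne
  have h1 : Module.finrank ℂ V = 1 := by
    rw [← finrank_top ℂ V, ← htop, finrank_span_singleton hv]
  omega

lemma cyclic_center_of_faithful [Finite G] (ρ : Representation ℂ G V)
    (hirr : Rep.IsIrreducible ρ) (hker : Rep.ker ρ = ⊥) :
    IsCyclic (Subgroup.center G) := by
  have : Nontrivial V := hirr.1
  obtain ⟨v, hv⟩ := exists_ne (0 : V)
  have hinj1 : ∀ a b : ℂ, a • (1 : Module.End ℂ V) = b • (1 : Module.End ℂ V) → a = b := by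
    intro a b hab
    have := congrArg (fun T : Module.End ℂ V => T v) hab
    simpa using smul_left_injective ℂ hv (by simpa using this)
  have hcomm : ∀ z : Subgroup.center G, ∀ g : G, (ρ z) * ρ g = ρ g * (ρ z) := by
    intro z g
    rw [← map_mul, ← map_mul, (Subgroup.mem_center_iff.mp z.2 g)]
  choose c hc using fun z : Subgroup.center G =>
    schur_scalar ρ hirr (ρ (z : G)) (hcomm z)
  let f : Subgroup.center G →* ℂ :=
    { toFun := c
      map_one' := by
        apply hinj1
        rw [← hc 1]
        simp
      map_mul' := by
        intro z w
        apply hinj1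
        rw [← hc (z * w)]
        push_cast
        rw [map_mul, hc z, hc w]
        simp [smul_smul, mul_comm] }
  have hfi : Function.Injective f := by
    intro z w hzw
    have hcc : c z = c w := hzw
    have h1 : ρ (z : G) = ρ (w : G) := by rw [hc z, hc w, hcc]
    have h2 : ((z : G) * (w : G)⁻¹) ∈ Rep.ker ρ := by
      rw [Rep.mem_ker_iff_s15, map_mul, h1, ← map_mul]
      simp
    rw [hker, Subgroup.mem_bot, mul_inv_eq_one] at h2
    exact Subtype.ext h2
  exact isCyclic_of_subgroup_isDomain f hfi

end Aux

/-- Let `G` have order `p^5`, nilpotency class at least 3,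
`cd(G) = {1, p}`, and non-cyclic center. Then every nonlinear irreducible character `χ`
satisfies `p^2 ≤ cod(χ) ≤ p^3`. -/
theorem stmt15 {p : ℕ} (hp : p.Prime) (G : Type*) [Group G] [Finite G]
    [Group.IsNilpotent G] (hcard : Nat.card G = p ^ 5)
    (hcl : 3 ≤ Group.nilpotencyClass G) (hcd : cdSet G = {1, p})
    (hZ : ¬ IsCyclic (Subgroup.center G))
    (V : Type) [AddCommGroup V] [Module ℂ V] [FiniteDimensional ℂ V]
    (ρ : Representation ℂ G V) (hirr : Rep.IsIrreducible ρ)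
    (hnl : 1 < Module.finrank ℂ V) :
    p ^ 2 ≤ Rep.cod ρ ∧ Rep.cod ρ ≤ p ^ 3 := by
  classical
  haveI := Fact.mk hp
  set N := Rep.ker ρ with hN
  haveI : N.Normal := MonoidHom.normal_ker _
  have hfr : Module.finrank ℂ V = p := by
    have hmem : Module.finrank ℂ V ∈ cdSet G :=
      ⟨V, ‹_›, ‹_›, ‹_›, ρ, hirr, rfl⟩
    rw [hcd] at hmem
    rcases hmem with h | h
    · exact absurd h (by omega)
    · exact h
  have hp1 : 1 < p := hp.one_lt
  have hdvd : N.index ∣ p ^ 5 := hcard ▸ Subgroup.index_dvd_card N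
  obtain ⟨k, hk5, hik⟩ := (Nat.dvd_prime_pow hp).mp hdvd
  obtain ⟨a, b, hab⟩ := exists_noncomm ρ hirr hnl
  have hnotcomm : ¬ ∀ x y : G ⧸ N, x * y = y * x := by
    intro hcomm
    apply hab
    have h1 : ((b * a : G) : G ⧸ N) = ((a * b : G) : G ⧸ N) := by
      rw [QuotientGroup.mk_mul, QuotientGroup.mk_mul]; exact hcomm _ _
    have h2 : (b * a)⁻¹ * (a * b) ∈ N := QuotientGroup.eq.mp h1
    have h3 : ρ ((b * a)⁻¹ * (a * b)) = 1 := (Rep.mem_ker_iff_s15 ρ).mp h2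
    have h4 : ρ (a * b) = ρ (b * a) := by
      have h5 : ρ (b * a) * ρ ((b * a)⁻¹ * (a * b)) = ρ (a * b) := by
        rw [← map_mul]; congr 1; group
      rw [h3, mul_one] at h5
      exact h5.symm
    rw [map_mul, map_mul] at h4
    exact h4
  have hcardQ : Nat.card (G ⧸ N) = p ^ k := by rw [← hik, Subgroup.index_eq_card]
  have hk3 : 3 ≤ k := by
    by_contra hlt
    apply hnotcomm
    interval_cases k
    · have hs := (Nat.card_eq_one_iff_unique.mp (by simpa using hcardQ)).1
      exact fun x y => Subsingleton.elim _ _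
    · haveI := isCyclic_of_prime_card (p := p) (by simpa using hcardQ)
      letI := IsCyclic.commGroup (α := G ⧸ N)
      exact fun x y => mul_comm x y
    · exact IsPGroup.commutative_of_card_eq_prime_sq hcardQ
  have hker : N ≠ ⊥ := fun h => hZ (cyclic_center_of_faithful ρ hirr h)
  have hcN : Nat.card N ∣ p ^ 5 := hcard ▸ Subgroup.card_subgroup_dvd_card N
  obtain ⟨m, hm5, hcm⟩ := (Nat.dvd_prime_pow hp).mp hcN
  have hm1 : 1 ≤ m := by
    rcases Nat.eq_zero_or_pos m with rfl | h
    · exact absurd (by rw [← Subgroup.card_eq_one]; simpa using hcm) hker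
    · exact h
  have hmk : m + k = 5 := by
    have hsum : p ^ (m + k) = p ^ 5 := by
      rw [pow_add, ← hcm, ← hik, Subgroup.card_mul_index, hcard]
    exact Nat.pow_right_injective hp.two_le hsum
  have hcod : Rep.cod ρ = p ^ (k - 1) := by
    rw [Rep.cod, hfr, ← hN, hik]
    rw [← Nat.pow_div (by omega) hp.pos, pow_one]
  constructor
  · rw [hcod]; exact Nat.pow_le_pow_right hp.pos (by omega)
  · rw [hcod]; exact Nat.pow_le_pow_right hp.pos (by omega)
end
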